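/- Minimality of the flat band of the modified honeycomb lattice: Let φ ∈ ℝ with cos φ > 0, set λ̂ := 2 cos φ − (1/2) sec φ and E^{(1)} := −cos φ − (1/2) sec φ. Then for every q = (q_1, q_2) ∈ ℝ², the smallest eigenvalue of the Hermitian 2×2 matrix Ĵ_hc(q, λ̂) equals E^{(1)}; equivalently, Ĵ_hc(q, λ̂) − E^{(1)}·I is positive semidefinite and singular for every q. -/

import Mathlib

/-- The Fourier-transformed dressed coupling matrix of the modified
(`J₁–J₂`) honeycomb lattice, with `J₁ = sin φ`, `J₂ = cos φ`. -/
noncomputable def Jhc (φ q1 q2 lam : ℝ) : Matrix (Fin 2) (Fin 2) ℂ :=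
  !![((2 * Real.cos φ * (Real.cos (q1 - q2) + Real.cos q1 + Real.cos q2) + lam : ℝ) : ℂ),
     ((Real.sin φ : ℝ) : ℂ) *
       (Complex.exp (-(Complex.I * (q1 : ℂ))) + Complex.exp (-(Complex.I * (q2 : ℂ))) + 1);
     ((Real.sin φ : ℝ) : ℂ) *
       (Complex.exp (Complex.I * (q1 : ℂ)) + Complex.exp (Complex.I * (q2 : ℂ)) + 1),
     ((-lam : ℝ) : ℂ)]

open ComplexOrder
open Matrix

lemma exp_I_real (q : ℝ) :
    Complex.exp (Complex.I * (q : ℂ)) = (Real.cos q : ℂ) + (Real.sin q : ℂ) * Complex.I := by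
  rw [mul_comm, Complex.exp_mul_I, ← Complex.ofReal_cos, ← Complex.ofReal_sin]

lemma exp_neg_I_real (q : ℝ) :
    Complex.exp (-(Complex.I * (q : ℂ))) = (Real.cos q : ℂ) - (Real.sin q : ℂ) * Complex.I := by
  have : -(Complex.I * (q : ℂ)) = ((-q : ℝ) : ℂ) * Complex.I := by push_cast; ring
  rw [this, Complex.exp_mul_I, ← Complex.ofReal_cos, ← Complex.ofReal_sin,
    Real.cos_neg, Real.sin_neg]
  push_cast; ring

lemma quad_id (c s p r : ℝ) (hc : c ≠ 0) (x0 x1 : ℂ) :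
    (starRingEnd ℂ) x0 * (((c:ℂ)*((p:ℂ)^2+(r:ℂ)^2)) * x0
        + ((s:ℂ)*(p:ℂ) - (s:ℂ)*(r:ℂ)*Complex.I) * x1)
      + (starRingEnd ℂ) x1 * (((s:ℂ)*(p:ℂ) + (s:ℂ)*(r:ℂ)*Complex.I) * x0
        + (s:ℂ)^2/(c:ℂ) * x1)
    = ((Complex.normSq (((c:ℂ)*(p:ℂ) + (c:ℂ)*(r:ℂ)*Complex.I) * x0 + (s:ℂ) * x1) : ℝ) : ℂ)
        / (c:ℂ) := by
  rw [Complex.normSq_eq_conj_mul_self]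
  simp only [map_add, _root_.map_mul, Complex.conj_ofReal, Complex.conj_I]
  field_simp [Complex.ofReal_ne_zero.mpr hc]
  ring_nf
  simp only [Complex.I_sq]
  ring

/-- Minimality of the flat band of the modified honeycomb lattice: for
`cos φ > 0`, with `λ̂ = 2 cos φ − (1/2) sec φ` and
`E⁽¹⁾ = −cos φ − (1/2) sec φ`, for every `q` the smallest eigenvalue of the
Hermitian matrix `Ĵ_hc(q, λ̂)` equals `E⁽¹⁾`; equivalently,
`Ĵ_hc(q, λ̂) − E⁽¹⁾·I` is positive semidefinite and singular. -/
theorem honeycomb_flat_band_minimal (φ : ℝ) (hφ : 0 < Real.cos φ) :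
    ∀ q1 q2 : ℝ,
      IsLeast
        {e : ℝ | ∃ v : Fin 2 → ℂ, v ≠ 0 ∧
          (Jhc φ q1 q2 (2 * Real.cos φ - (1/2) * (Real.cos φ)⁻¹)).mulVec v
            = (e : ℂ) • v}
        (-Real.cos φ - (1/2) * (Real.cos φ)⁻¹)
      ∧
      (Jhc φ q1 q2 (2 * Real.cos φ - (1/2) * (Real.cos φ)⁻¹)
        - ((-Real.cos φ - (1/2) * (Real.cos φ)⁻¹ : ℝ) : ℂ)
            • (1 : Matrix (Fin 2) (Fin 2) ℂ)).PosSemidef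
      ∧
      (Jhc φ q1 q2 (2 * Real.cos φ - (1/2) * (Real.cos φ)⁻¹)
        - ((-Real.cos φ - (1/2) * (Real.cos φ)⁻¹ : ℝ) : ℂ)
            • (1 : Matrix (Fin 2) (Fin 2) ℂ)).det = 0 := by
  intro q1 q2
  have hc : Real.cos φ ≠ 0 := hφ.ne'
  set c : ℝ := Real.cos φ with hcdef
  set s : ℝ := Real.sin φ with hsdef
  set lam : ℝ := 2 * c - (1/2) * c⁻¹ with hlamdef
  set E : ℝ := -c - (1/2) * c⁻¹ with hEdef
  set p : ℝ := Real.cos q1 + Real.cos q2 + 1 with hpdef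
  set r : ℝ := Real.sin q1 + Real.sin q2 with hrdef
  set M : Matrix (Fin 2) (Fin 2) ℂ :=
    Jhc φ q1 q2 lam - (E : ℂ) • (1 : Matrix (Fin 2) (Fin 2) ℂ) with hMdef
  have h1 : Real.sin q1 ^ 2 + Real.cos q1 ^ 2 = 1 := Real.sin_sq_add_cos_sq q1
  have h2 : Real.sin q2 ^ 2 + Real.cos q2 ^ 2 = 1 := Real.sin_sq_add_cos_sq q2
  have hφ2 : s ^ 2 + c ^ 2 = 1 := Real.sin_sq_add_cos_sq φ
  have e00 : 2 * c * (Real.cos (q1 - q2) + Real.cos q1 + Real.cos q2) + lam - E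
      = c * (p ^ 2 + r ^ 2) := by
    rw [Real.cos_sub, hlamdef, hEdef, hpdef, hrdef]
    linear_combination (-c) * h1 + (-c) * h2
  have e11 : -lam - E = s ^ 2 / c := by
    rw [hlamdef, hEdef, eq_div_iff hc]
    field_simp
    linear_combination (-2) * hφ2
  have key : M = !![((c * (p ^ 2 + r ^ 2) : ℝ) : ℂ),
      ((s * p : ℝ) : ℂ) - ((s * r : ℝ) : ℂ) * Complex.I;
      ((s * p : ℝ) : ℂ) + ((s * r : ℝ) : ℂ) * Complex.I,
      ((s ^ 2 / c : ℝ) : ℂ)] := by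
    ext i j
    fin_cases i <;> fin_cases j <;>
      simp [hMdef, Jhc, Matrix.one_apply, exp_I_real, exp_neg_I_real, ← hcdef, ← hsdef]
    · rw [show ((q1:ℂ) - (q2:ℂ)) = ((q1 - q2 : ℝ) : ℂ) by push_cast; ring,
        ← Complex.ofReal_cos, ← Complex.ofReal_cos, ← Complex.ofReal_cos]
      have := congrArg (fun x : ℝ => (x : ℂ)) e00
      simp only [Complex.ofReal_add, Complex.ofReal_sub, Complex.ofReal_mul, Complex.ofReal_ofNat,
        Complex.ofReal_pow] at this
      linear_combination this
    · rw [← Complex.ofReal_cos, ← Complex.ofReal_cos, ← Complex.ofReal_sin,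
        ← Complex.ofReal_sin, hpdef, hrdef]
      push_cast; ring
    · rw [← Complex.ofReal_cos, ← Complex.ofReal_cos, ← Complex.ofReal_sin,
        ← Complex.ofReal_sin, hpdef, hrdef]
      push_cast; ring
    · exact_mod_cast e11
  -- positive semidefiniteness
  have hpsd : M.PosSemidef := by
    rw [Matrix.posSemidef_iff_dotProduct_mulVec]
    constructor
    · rw [key]
      ext i j
      fin_cases i <;> fin_cases j <;>
        simp [Matrix.conjTranspose_apply, Complex.conj_ofReal] <;> ring
    · intro x
      have hq : dotProduct (star x) (M *ᵥ x)
          = ((Complex.normSq (((c:ℂ)*(p:ℂ) + (c:ℂ)*(r:ℂ)*Complex.I) * x 0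
              + ((s:ℝ):ℂ) * x 1) / c : ℝ) : ℂ) := by
        rw [key, Complex.ofReal_div]
        simp [Matrix.mulVec, dotProduct, Fin.sum_univ_two]
        push_cast
        linear_combination quad_id c s p r hc (x 0) (x 1)
      rw [hq]
      exact Complex.zero_le_real.mpr (div_nonneg (Complex.normSq_nonneg _) hφ.le)
  have hdet : M.det = 0 := by
    rw [key, Matrix.det_fin_two]
    simp only [Matrix.cons_val', Matrix.cons_val_zero, Matrix.cons_val_one, Matrix.head_cons,
      Matrix.head_fin_const, Matrix.empty_val', Matrix.cons_val_fin_one, Matrix.of_apply]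
    push_cast
    field_simp [Complex.ofReal_ne_zero.mpr hc]
    ring_nf
    simp only [Complex.I_sq]
    ring
  have heig : ∀ (v : Fin 2 → ℂ) (e : ℝ),
      (Jhc φ q1 q2 lam) *ᵥ v = (e : ℂ) • v ↔ M *ᵥ v = ((e - E : ℝ) : ℂ) • v := by
    intro v e
    rw [hMdef, Matrix.sub_mulVec, Matrix.smul_mulVec, Matrix.one_mulVec]
    constructor
    · intro h; rw [h]; push_cast; module
    · intro h
      have := h
      rw [sub_eq_iff_eq_add] at this
      rw [this]; push_cast; module
  refine ⟨⟨?_, ?_⟩, hpsd, hdet⟩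
  · -- membership : eigenvector with eigenvalue E
    by_cases hw : (p : ℂ) + (r : ℂ) * Complex.I = 0
    · refine ⟨![1, 0], ?_, ?_⟩
      · intro h
        have := congrFun h 0
        simp at this
      · rw [heig _ E]
        have hp0 : p = 0 := by
          have := congrArg Complex.re hw; simpa using this
        have hr0 : r = 0 := by
          have := congrArg Complex.im hw; simpa using this
        funext i
        fin_cases i <;>
          simp [key, Matrix.mulVec, dotProduct, Fin.sum_univ_two, hp0, hr0]
    · refine ⟨![(-s : ℝ), (c : ℂ) * ((p : ℂ) + (r : ℂ) * Complex.I)], ?_, ?_⟩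
      · intro h
        have := congrFun h 1
        simp only [Matrix.cons_val_one, Matrix.head_cons, Pi.zero_apply] at this
        rcases mul_eq_zero.mp this with h' | h'
        · exact (Complex.ofReal_ne_zero.mpr hc) h'
        · exact hw h'
      · rw [heig _ E]
        funext i
        fin_cases i <;>
          simp [key, Matrix.mulVec, dotProduct, Fin.sum_univ_two]
        · linear_combination (-(c:ℂ)*(s:ℂ)*(r:ℂ)^2) * Complex.I_sq
        · field_simp [Complex.ofReal_ne_zero.mpr hc]
          ring
  · -- lower bound
    rintro e ⟨v, hv0, hveq⟩
    have hMv : M *ᵥ v = ((e - E : ℝ) : ℂ) • v := (heig v e).mp hveq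
    have hq := hpsd.dotProduct_mulVec_nonneg v
    rw [hMv] at hq
    have hdot : dotProduct (star v) (((e - E : ℝ) : ℂ) • v)
        = (((e - E) * (Complex.normSq (v 0) + Complex.normSq (v 1)) : ℝ) : ℂ) := by
      simp only [dotProduct, Fin.sum_univ_two, Pi.smul_apply, smul_eq_mul, Pi.star_apply]
      push_cast [Complex.normSq_eq_conj_mul_self]
      simp only [RCLike.star_def]
      ring
    rw [hdot, Complex.zero_le_real] at hq
    have hn : 0 < Complex.normSq (v 0) + Complex.normSq (v 1) := by
      have : v 0 ≠ 0 ∨ v 1 ≠ 0 := by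
        by_contra h
        push_neg at h
        exact hv0 (funext fun i => by fin_cases i <;> simp [h.1, h.2])
      rcases this with h | h
      · exact add_pos_of_pos_of_nonneg (Complex.normSq_pos.mpr h) (Complex.normSq_nonneg _)
      · exact add_pos_of_nonneg_of_pos (Complex.normSq_nonneg _) (Complex.normSq_pos.mpr h)
    nlinarith [hq, hn]
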